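/- For the dyadic tree (K = 2) with non-radial data λ_1 ≡ μ_1 ≡ 1 on the subtree T_1 and λ_2 ≡ 1, μ_2(x) = 2^{−j(x)} on T_2, one has R_p|_{T_1} = (1/2)∫_0^∞ 2^{j(t)/(1−p)} dt < ∞ and R_p|_{T_2} = (1/2)∫_0^∞ (2^{−j(t)})^{1/(1−p)} 2^{j(t)/(1−p)} dt = (1/2)∫_0^∞ 1 dt = ∞, hence R_p = R_p|_{T_1} + R_p|_{T_2} = ∞. -/

import Mathlib

/-!
The integrand of `R_p|_{T₂}` is identically `1`, because the weight `μ₂ = 2^{-j}` exactly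
cancels the factor `2^{j/(1-p)}`; so `R_p|_{T₂}` is half the length of a half-line. On `T₁`
the integrand `2^{⌈t⌉/(1-p)}` is dominated by the integrable exponential `2^{t/(1-p)}`,
since `1 - p < 0`.
-/

open MeasureTheory Set ENNReal

lemma rpow_neg_rpow_one_div_mul_rpow_div {a : ℝ} (ha : 0 < a) (x c : ℝ) :
    (a ^ (-x)) ^ (1 / c) * a ^ (x / c) = 1 := by
  rw [← Real.rpow_mul ha.le, ← Real.rpow_add ha]
  convert Real.rpow_zero a using 2
  ring

lemma integrableOn_rpow_div_Ioi {b c : ℝ} (hb : 1 < b) (hc : c < 0) (a : ℝ) :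
    IntegrableOn (fun t : ℝ => b ^ (t / c)) (Ioi a) := by
  have hrate : 0 < Real.log b / -c := div_pos (Real.log_pos hb) (neg_pos.2 hc)
  convert exp_neg_integrableOn_Ioi a hrate using 2 with t
  rw [Real.rpow_def_of_pos (by linarith)]
  congr 1
  field_simp

lemma setLIntegral_Ioi_rpow_ceil_div_lt_top {b c : ℝ} (hb : 1 < b) (hc : c < 0) :
    ∫⁻ t in Ioi (0 : ℝ), ENNReal.ofReal (b ^ ((⌈t⌉ : ℝ) / c)) < ⊤ := by
  have hle : ∀ t : ℝ, b ^ ((⌈t⌉ : ℝ) / c) ≤ b ^ (t / c) := fun t =>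
    Real.rpow_le_rpow_of_exponent_le hb.le (div_le_div_of_nonpos_of_le hc.le (Int.le_ceil t))
  calc ∫⁻ t in Ioi (0 : ℝ), ENNReal.ofReal (b ^ ((⌈t⌉ : ℝ) / c))
      ≤ ∫⁻ t in Ioi (0 : ℝ), ENNReal.ofReal (b ^ (t / c)) :=
        lintegral_mono fun t => ENNReal.ofReal_le_ofReal (hle t)
    _ < ⊤ := (integrableOn_rpow_div_Ioi hb hc 0).setLIntegral_lt_top

lemma setLIntegral_Ioi_one (a : ℝ) : ∫⁻ _ in Ioi a, (1 : ℝ≥0∞) = ⊤ := by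
  rw [setLIntegral_one, Real.volume_Ioi]

/-- For the dyadic tree (`K = 2`) with non-radial data `λ₁ ≡ μ₁ ≡ 1` on `T₁` and
`λ₂ ≡ 1`, `μ₂(t) = 2^{−j(t)}` on `T₂` (where `j(t) = ⌈t⌉`):
`R_p|_{T₁} = (1/2)∫_0^∞ 2^{j(t)/(1−p)} dt < ∞`,
`R_p|_{T₂} = (1/2)∫_0^∞ (2^{−j(t)})^{1/(1−p)} 2^{j(t)/(1−p)} dt = (1/2)∫_0^∞ 1 dt = ∞`,
hence `R_p = R_p|_{T₁} + R_p|_{T₂} = ∞`. -/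
theorem stmt16 (p : ℝ) (hp : 1 < p) :
    (1/2 : ℝ≥0∞) * (∫⁻ t in Set.Ioi (0:ℝ),
        ENNReal.ofReal ((2:ℝ) ^ ((⌈t⌉:ℝ)/(1-p)))) < ⊤ ∧
    (1/2 : ℝ≥0∞) * (∫⁻ t in Set.Ioi (0:ℝ),
        ENNReal.ofReal (((2:ℝ) ^ (-(⌈t⌉:ℝ))) ^ ((1:ℝ)/(1-p)) * (2:ℝ) ^ ((⌈t⌉:ℝ)/(1-p)))) =
      (1/2 : ℝ≥0∞) * (∫⁻ t in Set.Ioi (0:ℝ), (1:ℝ≥0∞)) ∧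
    (1/2 : ℝ≥0∞) * (∫⁻ t in Set.Ioi (0:ℝ),
        ENNReal.ofReal (((2:ℝ) ^ (-(⌈t⌉:ℝ))) ^ ((1:ℝ)/(1-p)) * (2:ℝ) ^ ((⌈t⌉:ℝ)/(1-p)))) = ⊤ ∧
    (1/2 : ℝ≥0∞) * (∫⁻ t in Set.Ioi (0:ℝ),
        ENNReal.ofReal ((2:ℝ) ^ ((⌈t⌉:ℝ)/(1-p)))) +
      (1/2 : ℝ≥0∞) * (∫⁻ t in Set.Ioi (0:ℝ),
        ENNReal.ofReal (((2:ℝ) ^ (-(⌈t⌉:ℝ))) ^ ((1:ℝ)/(1-p)) * (2:ℝ) ^ ((⌈t⌉:ℝ)/(1-p)))) = ⊤ := by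
  have hT₁ := setLIntegral_Ioi_rpow_ceil_div_lt_top one_lt_two (sub_neg.2 hp)
  have hT₂ : ∫⁻ t in Ioi (0 : ℝ), ENNReal.ofReal (((2 : ℝ) ^ (-(⌈t⌉ : ℝ))) ^ ((1 : ℝ) / (1 - p))
      * (2 : ℝ) ^ ((⌈t⌉ : ℝ) / (1 - p))) = ∫⁻ _ in Ioi (0 : ℝ), (1 : ℝ≥0∞) := by
    simp only [rpow_neg_rpow_one_div_mul_rpow_div two_pos, ENNReal.ofReal_one]
  have hhalf_top : (1 / 2 : ℝ≥0∞) * ⊤ = ⊤ := ENNReal.mul_top (by norm_num)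
  refine ⟨ENNReal.mul_lt_top (by norm_num) hT₁, by rw [hT₂], ?_, ?_⟩
  · rw [hT₂, setLIntegral_Ioi_one, hhalf_top]
  · rw [hT₂, setLIntegral_Ioi_one, hhalf_top, add_top]
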